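/- Let d ≥ 2, q = exp(2πi/d), and let V_a be the d×d matrix V_a = E_{0,d-1} + ∑_{k=1}^{d-1} q^{(d-k)a} E_{k,k-1}. Then V_a φ(a,α) = q^{(d-1)a/2 - α} φ(a,α), where φ(a,α)_k = (1/√d)·exp(2πi(k(d-k)a/2 + kα)/d). -/
import Mathlib


open Complex Finset Matrix

/-- The matrix `V_a = E_{0,d-1} + ∑_{k=1}^{d-1} q^{(d-k)a} E_{k,k-1}` where
`q^x = exp(2πix/d)`: entry `(k, k-1)` is `q^{(d-k)a}` for `k ≥ 1`, entry `(0, d-1)` is `1`. -/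
noncomputable def Vmat (d : ℕ) (a : ℝ) : Matrix (Fin d) (Fin d) ℂ := fun i l =>
  if (i : ℕ) = 0 ∧ (l : ℕ) = d - 1 then 1
  else if (i : ℕ) = (l : ℕ) + 1 then
    Complex.exp (2 * (Real.pi : ℂ) * Complex.I * ((((d : ℝ) - (i : ℕ)) * a : ℝ) / (d : ℂ)))
  else 0

/-- The vector `φ(a,α)` with components `(1/√d)·exp(2πi(k(d-k)a/2 + kα)/d)`. -/
noncomputable def phiVec (d : ℕ) (a : ℝ) (α : ℕ) : Fin d → ℂ := fun k =>
  ((1 / Real.sqrt d : ℝ) : ℂ) *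
    Complex.exp (2 * (Real.pi : ℂ) * Complex.I *
      ((((k : ℕ) : ℝ) * ((d : ℝ) - (k : ℕ)) * a / 2 + ((k : ℕ) : ℝ) * α : ℝ) / (d : ℂ)))

/-- `V_a φ(a,α) = q^{(d-1)a/2 - α} φ(a,α)`. -/
theorem stmt_11 (d : ℕ) (hd : 2 ≤ d) (a : ℝ) (α : ℕ) (hα : α < d) :
    (Vmat d a).mulVec (phiVec d a α) =
      Complex.exp (2 * (Real.pi : ℂ) * Complex.I *
          (((((d : ℝ) - 1) * a / 2 - α) : ℝ) / (d : ℂ))) • phiVec d a α := by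
  have hd0 : (d:ℂ) ≠ 0 := Nat.cast_ne_zero.mpr (by omega)
  have key1 : ∀ (c e x y : ℂ), Complex.exp x = Complex.exp (y + e) →
      c * Complex.exp x = Complex.exp e * (c * Complex.exp y) := by
    intro c e x y h
    rw [h, Complex.exp_add]; ring
  have key2 : ∀ (c e f x y : ℂ), Complex.exp (x + f) = Complex.exp (y + e) →
      Complex.exp f * (c * Complex.exp x) = Complex.exp e * (c * Complex.exp y) := by
    intro c e f x y h
    rw [show Complex.exp f * (c * Complex.exp x) = c * Complex.exp (x + f) by
      rw [Complex.exp_add]; ring, h, Complex.exp_add]; ring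
  funext i
  rw [mulVec, dotProduct, Pi.smul_apply, smul_eq_mul]
  by_cases hi : (i : ℕ) = 0
  · rw [Finset.sum_eq_single (⟨d-1, by omega⟩ : Fin d)]
    · have h1 : Vmat d a i ⟨d-1, by omega⟩ = 1 := by simp [Vmat, hi]
      rw [h1, one_mul, phiVec, phiVec]
      refine key1 _ _ _ _ ?_
      rw [Complex.exp_eq_exp_iff_exists_int]
      refine ⟨α, ?_⟩
      simp only [hi, Fin.val_mk]
      push_cast [Nat.cast_sub (by omega : 1 ≤ d)]
      field_simp
      ring
    · intro l _ hl
      have hv : (l:ℕ) ≠ d - 1 := by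
        intro h; exact hl (Fin.ext (by simp [h]))
      have hz : Vmat d a i l = 0 := by
        unfold Vmat
        rw [if_neg (by tauto), if_neg (by omega)]
      rw [hz, zero_mul]
    · simp
  · rw [Finset.sum_eq_single (⟨(i:ℕ)-1, by omega⟩ : Fin d)]
    · have h1 : Vmat d a i ⟨(i:ℕ)-1, by omega⟩ =
        Complex.exp (2 * (Real.pi : ℂ) * Complex.I * ((((d : ℝ) - (i : ℕ)) * a : ℝ) / (d : ℂ))) := by
        unfold Vmat
        rw [if_neg (by simp [hi]), if_pos (by simp only [Fin.val_mk]; omega)]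
      rw [h1, phiVec, phiVec]
      refine key2 _ _ _ _ _ ?_
      rw [Complex.exp_eq_exp_iff_exists_int]
      refine ⟨0, ?_⟩
      simp only [Fin.val_mk]
      push_cast [Nat.cast_sub (by omega : 1 ≤ (i:ℕ))]
      field_simp
      ring
    · intro l _ hl
      have hv : (l:ℕ) + 1 ≠ (i:ℕ) := by
        intro h; exact hl (Fin.ext (by simp; omega))
      have hz : Vmat d a i l = 0 := by
        unfold Vmat
        rw [if_neg (by tauto), if_neg (by omega)]
      rw [hz, zero_mul]
    · simp
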